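/- arXiv:1504.00052 — 2 statements merged into one kernel-verified Lean document; each statement's English description precedes it below -/
import Mathlib

section
/- Let Q be a finite nonempty set (or multiset) of permutations of {1,...,n}, let h be a real-valued function on sequences of length n, and let c be a fixed sequence of length n. If σ* is drawn uniformly at random from Q, and rank ties among equal values of h are broken uniformly at random, then for every k ∈ {1,...,|Q|}, the probability that h(σ*c) has rank k among the multiset {h(σc) : σ ∈ Q} equals 1/|Q|. -/
/-!
For a fixed tie-breaking priority `p`, the rank is one plus the number of predecessors in the
lexicographic order of the keys `(h(σc), p σ)`. These keys are pairwise distinct, so the ranks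
run bijectively over `{1, …, |Q|}`: for every `p` exactly one `σ ∈ Q` has rank `k`. So the pairs
`(σ*, p)` of rank `k` are in bijection with the priorities, a fraction `1/|Q|` of all pairs.
-/

/-- The sequence `c` permuted by `σ`. -/
def permSeq {n : ℕ} {α : Type*} (σ : Equiv.Perm (Fin n)) (c : Fin n → α) : Fin n → α :=
  fun i => c (σ i)

/-- Rank (starting from 1) of the entry indexed by `i` among the values `H j`,
with ties among equal values broken according to the priorities `p`. -/
noncomputable def tbRank {ι : Type*} [Fintype ι] [DecidableEq ι] (H : ι → ℝ) {m : ℕ}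
    (p : ι ≃ Fin m) (i : ι) : ℕ :=
  1 + (Finset.univ.filter (fun j => H j < H i ∨ (H j = H i ∧ p j < p i))).card

open Finset Function

section PredecessorCount

variable {ι β : Type*} [Fintype ι] [LinearOrder β] {f : ι → β}

lemma card_filter_lt_lt_card (f : ι → β) (i : ι) : #{j | f j < f i} < Fintype.card ι :=
  card_lt_card (filter_ssubset.2 ⟨i, mem_univ i, lt_irrefl _⟩)

lemma card_filter_lt_lt_of_lt {i i' : ι} (h : f i < f i') :
    #{j | f j < f i} < #{j | f j < f i'} := by
  refine card_lt_card ((ssubset_iff_of_subset fun j hj => ?_).2 ⟨i, ?_, ?_⟩) <;>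
    simp_all only [mem_filter, mem_univ, true_and, lt_irrefl, not_false_eq_true]
  exact hj.trans h

lemma injective_card_filter_lt (hf : Injective f) : Injective fun i => #{j | f j < f i} := by
  intro i i' he
  rcases lt_trichotomy (f i) (f i') with hlt | heq | hgt
  · exact absurd he (card_filter_lt_lt_of_lt hlt).ne
  · exact hf heq
  · exact absurd he (card_filter_lt_lt_of_lt hgt).ne'

lemma existsUnique_card_filter_lt_eq (hf : Injective f) {r : ℕ} (hr : r < Fintype.card ι) :
    ∃! i, #{j | f j < f i} = r := by
  let g : ι → Fin (Fintype.card ι) := fun i => ⟨_, card_filter_lt_lt_card f i⟩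
  have hg : Bijective g := (Fintype.bijective_iff_injective_and_card g).2
    ⟨fun i i' he => injective_card_filter_lt hf (congrArg Fin.val he), (Fintype.card_fin _).symm⟩
  simpa [g, Fin.ext_iff] using hg.existsUnique ⟨r, hr⟩

end PredecessorCount

section TieBreakRank

variable {ι : Type*} [Fintype ι] [DecidableEq ι] {m : ℕ}

lemma tbRank_eq_one_add_card_lex (H : ι → ℝ) (p : ι ≃ Fin m) (i : ι) :
    tbRank H p i = 1 + #{j | toLex (H j, p j) < toLex (H i, p i)} := by
  simp only [tbRank, Prod.Lex.toLex_lt_toLex]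

lemma tbRank_existsUnique (H : ι → ℝ) (p : ι ≃ Fin m) {k : ℕ} (hk1 : 1 ≤ k) (hk2 : k ≤ m) :
    ∃! i, tbRank H p i = k := by
  have hkey : Injective fun i => toLex (H i, p i) := fun i j hij =>
    p.injective (congrArg (fun x => (ofLex x).2) hij)
  have hcard : k - 1 < Fintype.card ι := by rw [Fintype.card_congr p, Fintype.card_fin]; omega
  obtain ⟨i, hi, hu⟩ := existsUnique_card_filter_lt_eq hkey hcard
  refine ⟨i, ?_, fun j hj => hu j ?_⟩ <;>
    simp only [tbRank_eq_one_add_card_lex] at * <;> omega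

end TieBreakRank

lemma card_filter_prod_eq_card_right {A B : Type*} [Fintype A] [Fintype B] (R : A → B → Prop)
    [∀ a b, Decidable (R a b)] (h : ∀ b, ∃! a, R a b) :
    #{x : A × B | R x.1 x.2} = Fintype.card B := by
  rw [card_filter, Fintype.sum_prod_type_right, Fintype.card_eq_sum_ones]
  refine sum_congr rfl fun b _ => ?_
  rw [← card_filter, card_eq_one]
  obtain ⟨a, ha, hu⟩ := h b
  exact ⟨a, by ext a'; simpa using ⟨hu a', fun e => e ▸ ha⟩⟩

theorem rank_uniform_fixed_sequence_general {α : Type*} (n : ℕ)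
    (Q : Finset (Equiv.Perm (Fin n)))
    (h : (Fin n → α) → ℝ) (c : Fin n → α)
    (k : ℕ) (hk1 : 1 ≤ k) (hk2 : k ≤ Q.card) :
    (((Finset.univ : Finset (↥Q × (↥Q ≃ Fin Q.card))).filter
        (fun sp => tbRank (fun σ : ↥Q => h (permSeq (σ : Equiv.Perm (Fin n)) c)) sp.2 sp.1
          = k)).card : ℝ)
      / ((Finset.univ : Finset (↥Q × (↥Q ≃ Fin Q.card))).card : ℝ)
      = 1 / Q.card := by
  rw [card_filter_prod_eq_card_right _ fun p => tbRank_existsUnique _ p hk1 hk2, card_univ,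
    Fintype.card_prod, Fintype.card_coe]
  have hQ : (Q.card : ℝ) ≠ 0 := by norm_cast; omega
  have hP : (Fintype.card (↥Q ≃ Fin Q.card) : ℝ) ≠ 0 := by
    have : Nonempty (↥Q ≃ Fin Q.card) := ⟨Fintype.equivFinOfCardEq (Fintype.card_coe Q)⟩
    exact_mod_cast Fintype.card_pos.ne'
  push_cast
  field_simp

/-- If `σ*` is drawn uniformly at random from a finite nonempty set `Q` of permutations and
ties are broken uniformly at random, then for every `k ∈ {1, …, |Q|}` the probability that
`h(σ* c)` has rank `k` among the multiset `{h(σ c) | σ ∈ Q}` equals `1/|Q|`. -/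
theorem rank_uniform_fixed_sequence {α : Type*} (n : ℕ)
    (Q : Finset (Equiv.Perm (Fin n))) (hQ : Q.Nonempty)
    (h : (Fin n → α) → ℝ) (c : Fin n → α)
    (k : ℕ) (hk1 : 1 ≤ k) (hk2 : k ≤ Q.card) :
    (((Finset.univ : Finset (↥Q × (↥Q ≃ Fin Q.card))).filter
        (fun sp => tbRank (fun σ : ↥Q => h (permSeq (σ : Equiv.Perm (Fin n)) c)) sp.2 sp.1
          = k)).card : ℝ)
      / ((Finset.univ : Finset (↥Q × (↥Q ≃ Fin Q.card))).card : ℝ)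
      = 1 / Q.card :=
  rank_uniform_fixed_sequence_general n Q h c k hk1 hk2
end

section
/- Let C = (Z₁,...,Z_{t+w}) be i.i.d. examples Zᵢ = (Xᵢ,Yᵢ) with labels Yᵢ ∈ {0,1}, let g be a fixed classifier, and define the working-set error E_c = (1/w)·Σ_{i=t+1}^{t+w} 1[g(xᵢ) ≠ yᵢ] for a sequence c. For an assignment a ∈ {0,1}^w let C(a) denote C with the last w labels replaced by a, and define the likely set L = {a ∈ {0,1}^w : rank(h(C(a)), {h(σ(σ*)⁻¹C(a)) : σ ∈ Q}) ≤ ⌈(1−δ)|Q|⌉}, where σ* is uniform on Q independent of C. Then Pr[E_C ≤ max_{a ∈ L} E_{C(a)}] ≥ 1 − δ. -/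
open MeasureTheory ProbabilityTheory

instance {n : ℕ} (Q : Finset (Equiv.Perm (Fin n))) : MeasurableSpace ↥Q := ⊤
instance {n m : ℕ} (Q : Finset (Equiv.Perm (Fin n))) : MeasurableSpace (↥Q ≃ Fin m) := ⊤

/-- `c` with the labels of the last `w` examples replaced by the assignment `a`. -/
def assign {β : Type*} (t w : ℕ) (c : Fin (t + w) → β × Bool) (a : Fin w → Bool) :
    Fin (t + w) → β × Bool :=
  fun i => if h : (i : ℕ) < t then c i else ((c i).1, a ⟨(i : ℕ) - t, by omega⟩)

/-- Error rate of classifier `g` on the last `w` examples of `c`. -/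
noncomputable def errRate {β : Type*} (t w : ℕ) (g : β → Bool)
    (c : Fin (t + w) → β × Bool) : ℝ :=
  (1 / (w : ℝ)) *
    (Finset.univ.filter (fun i : Fin (t + w) => t ≤ (i : ℕ) ∧ g (c i).1 ≠ (c i).2)).card

/-! On the event that the observed sequence `C` ranks at most `k = ⌈(1 - δ)|Q|⌉` among
`σ ↦ h(σ (σ*)⁻¹ C)`, the true labelling `a*` belongs to `L` and `E_C = E_{C(a*)}` is one of the
errors maximised over. As `C` is i.i.d., its law is invariant under `(σ*)⁻¹`, so conditionally
on `σ*` and the tie-breaking order the event has the probability that `σ*` ranks at most `k`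
among `σ ↦ h(σ C)`. Tie-breaking makes the ranks a bijection onto `1, …, |Q|`, so exactly `k`
of the `|Q|` equally likely values of `σ*` qualify: the event has probability
`k / |Q| ≥ 1 - δ`. -/

open Finset
open scoped ENNReal

lemma assign_labels_self {β : Type*} (t w : ℕ) (c : Fin (t + w) → β × Bool) :
    assign t w c (fun i => (c (Fin.natAdd t i)).2) = c := by
  funext i
  unfold assign
  split_ifs with hi
  · rfl
  · have : Fin.natAdd t ⟨(i : ℕ) - t, by omega⟩ = i := Fin.ext (by simp; omega)
    dsimp only
    rw [this]

lemma card_filter_card_filter_lt_lt {ι α : Type*} [Fintype ι] [LinearOrder α] {f : ι → α}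
    (hf : Function.Injective f) (k : ℕ) :
    #{i | #{j | f j < f i} < k} = min (Fintype.card ι) k := by
  set ρ : ι → ℕ := fun i => #{j | f j < f i}
  have hρ_lt : ∀ i, ρ i < Fintype.card ι := fun i =>
    card_lt_univ_of_notMem (x := i) (by simp)
  have hρ_mono : ∀ i j, f i < f j → ρ i < ρ j := fun i j hij =>
    card_lt_card (ssubset_iff_of_subset (fun x hx => by simp at hx ⊢; exact hx.trans hij) |>.2
      ⟨i, by simp [hij]⟩)
  have hρ_inj : Function.Injective ρ := by
    intro i j hij
    by_contra hne
    rcases lt_or_gt_of_ne (hf.ne hne) with h | h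
    · exact (hρ_mono i j h).ne hij
    · exact (hρ_mono j i h).ne' hij
  let e : ι ≃ Fin (Fintype.card ι) := Equiv.ofBijective (fun i => ⟨ρ i, hρ_lt i⟩)
    ((Fintype.bijective_iff_injective_and_card _).2
      ⟨fun i j h => hρ_inj (congrArg Fin.val h), by simp⟩)
  rw [← Fin.card_filter_val_lt]
  exact card_equiv e (by simp [e, ρ])

lemma tbRank_eq_one_add_card_lex_lt {ι : Type*} [Fintype ι] [DecidableEq ι] (H : ι → ℝ)
    {m : ℕ} (p : ι ≃ Fin m) (i : ι) :
    tbRank H p i = 1 + #{j | toLex (H j, p j) < toLex (H i, p i)} := by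
  simp only [tbRank, Prod.Lex.toLex_lt_toLex]

lemma card_filter_tbRank_le {ι : Type*} [Fintype ι] [DecidableEq ι] (H : ι → ℝ) {m : ℕ}
    (p : ι ≃ Fin m) (k : ℕ) :
    #{i | tbRank H p i ≤ k} = min (Fintype.card ι) k := by
  have hinj : Function.Injective fun i => toLex (H i, p i) :=
    fun i j h => p.injective (congrArg (fun x => (ofLex x).2) h)
  rw [← card_filter_card_filter_lt_lt hinj]
  congr 1
  exact filter_congr fun i _ => by rw [tbRank_eq_one_add_card_lex_lt]; omega

lemma measurable_tbRank {X ι : Type*} [MeasurableSpace X] [Fintype ι] [DecidableEq ι]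
    {H : X → ι → ℝ} (hH : ∀ j, Measurable fun x => H x j) {m : ℕ} (p : ι ≃ Fin m) (i : ι) :
    Measurable fun x => tbRank (H x) p i := by
  simp only [tbRank, card_filter]
  refine measurable_const.add (measurable_sum _ fun j _ => Measurable.ite ?_
    measurable_const measurable_const)
  exact (measurableSet_lt (hH j) (hH i)).union
    ((measurableSet_eq_fun (hH j) (hH i)).inter (MeasurableSet.const _))

lemma measurable_permSeq {n : ℕ} {α : Type*} [MeasurableSpace α] (σ : Equiv.Perm (Fin n)) :
    Measurable (permSeq σ : (Fin n → α) → Fin n → α) :=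
  measurable_pi_lambda _ fun i => measurable_pi_apply (σ i)

lemma map_permSeq_eq_of_iIndepFun_identDistrib {Ω α : Type*} [MeasurableSpace Ω]
    [MeasurableSpace α] {μ : Measure Ω} {n : ℕ} {X : Ω → Fin n → α} (hX : Measurable X)
    (hIndep : iIndepFun (fun i ω => X ω i) μ)
    (hIdent : ∀ i j, IdentDistrib (fun ω => X ω i) (fun ω => X ω j) μ μ)
    (σ : Equiv.Perm (Fin n)) :
    μ.map (fun ω => permSeq σ (X ω)) = μ.map X := by
  have hXi : ∀ i, AEMeasurable (fun ω => X ω i) μ := fun i =>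
    ((measurable_pi_apply i).comp hX).aemeasurable
  rw [show (fun ω => permSeq σ (X ω)) = fun ω i => X ω (σ i) from rfl,
    (hIndep.precomp σ.injective).map_fun_eq_pi_map fun i => hXi (σ i)]
  exact (congrArg Measure.pi (funext fun i => (hIdent (σ i) i).map_eq)).trans
    (hIndep.map_fun_eq_pi_map hXi).symm

lemma measure_mem_of_indepFun_uniform {Ω E I : Type*} [MeasurableSpace Ω] [MeasurableSpace E]
    [MeasurableSpace I] [MeasurableSingletonClass I] [Fintype I] {μ : Measure Ω}
    {X : Ω → E} {U : Ω → I} (hU : Measurable U)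
    (hne : (univ : Finset I).Nonempty)
    (hUnif : μ.map U = (PMF.uniformOfFinset univ hne).toMeasure) (hInd : IndepFun X U μ)
    {D : I → Set E} (hD : ∀ u, MeasurableSet (D u)) :
    μ {ω | X ω ∈ D (U ω)} = (∑ u, μ (X ⁻¹' D u)) / Fintype.card I := by
  have hfiber : ∀ u, μ (U ⁻¹' {u}) = (Fintype.card I : ℝ≥0∞)⁻¹ := fun u => by
    rw [← Measure.map_apply hU (measurableSet_singleton u), hUnif,
      PMF.toMeasure_apply_singleton _ _ (measurableSet_singleton u), PMF.uniformOfFinset_apply,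
      if_pos (mem_univ u), card_univ]
  calc μ {ω | X ω ∈ D (U ω)}
      = ∑ u, (μ.restrict {ω | X ω ∈ D (U ω)}) (U ⁻¹' {u}) := by
        rw [sum_measure_preimage_singleton _ fun u _ => hU (measurableSet_singleton u),
          coe_univ, Set.preimage_univ, Measure.restrict_apply_univ]
    _ = ∑ u, μ (X ⁻¹' D u) * μ (U ⁻¹' {u}) := by
        refine Fintype.sum_congr _ _ fun u => ?_
        rw [Measure.restrict_apply (hU (measurableSet_singleton u)),
          ← hInd.measure_inter_preimage_eq_mul _ _ (hD u) (measurableSet_singleton u)]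
        congr 1
        ext ω
        simp +contextual [and_comm]
    _ = (∑ u, μ (X ⁻¹' D u)) / Fintype.card I := by
        simp only [hfiber, ← sum_mul, div_eq_mul_inv]

lemma sum_measure_eq_of_card_filter_mem {Ω ι : Type*} [MeasurableSpace Ω] [Fintype ι]
    (μ : Measure Ω) {s : ι → Set Ω} [∀ i, DecidablePred (· ∈ s i)]
    (hs : ∀ i, MeasurableSet (s i)) {k : ℕ} (hk : ∀ ω, #{i | ω ∈ s i} = k) :
    ∑ i, μ (s i) = k * μ Set.univ := by
  calc ∑ i, μ (s i) = ∑ i, ∫⁻ ω, (s i).indicator 1 ω ∂μ :=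
        Fintype.sum_congr _ _ fun i => (lintegral_indicator_one (hs i)).symm
    _ = ∫⁻ ω, ∑ i, (s i).indicator 1 ω ∂μ :=
        (lintegral_finsetSum _ fun i _ => measurable_one.indicator (hs i)).symm
    _ = ∫⁻ _, (k : ℝ≥0∞) ∂μ := by
        refine lintegral_congr fun ω => ?_
        simp only [Set.indicator_apply, Pi.one_apply, sum_boole, hk]
    _ = k * μ Set.univ := lintegral_const _

lemma measure_tbRank_le_eq_div_card {Ω α : Type*} [MeasurableSpace Ω] [MeasurableSpace α]
    {μ : Measure Ω} [IsProbabilityMeasure μ] {n : ℕ} {X : Ω → Fin n → α} (hX : Measurable X)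
    (hinv : ∀ σ : Equiv.Perm (Fin n), μ.map (fun ω => permSeq σ (X ω)) = μ.map X)
    {H : (Fin n → α) → ℝ} (hH : Measurable H)
    {Q : Finset (Equiv.Perm (Fin n))} {S : Ω → Q} {T : Ω → (Q ≃ Fin Q.card)}
    (hST : Measurable fun ω => (S ω, T ω))
    (hne : (univ : Finset (Q × (Q ≃ Fin Q.card))).Nonempty)
    (hUnif : μ.map (fun ω => (S ω, T ω)) = (PMF.uniformOfFinset univ hne).toMeasure)
    (hInd : IndepFun X (fun ω => (S ω, T ω)) μ) {k : ℕ} (hk : k ≤ Q.card) :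
    μ {ω | tbRank (fun σ : Q => H (permSeq σ (permSeq (S ω : Equiv.Perm (Fin n))⁻¹ (X ω))))
      (T ω) (S ω) ≤ k} = k / Q.card := by
  classical
  set B : Q × (Q ≃ Fin Q.card) → Set (Fin n → α) :=
    fun x => {c | tbRank (fun σ : Q => H (permSeq σ c)) x.2 x.1 ≤ k}
  have hB : ∀ x, MeasurableSet (B x) := fun x =>
    measurable_tbRank (fun σ => hH.comp (measurable_permSeq _)) x.2 x.1 measurableSet_Iic
  have hinvB : ∀ x : Q × (Q ≃ Fin Q.card),
      μ (X ⁻¹' (permSeq (x.1 : Equiv.Perm (Fin n))⁻¹ ⁻¹' B x)) = μ (X ⁻¹' B x) := fun x => by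
    rw [← Set.preimage_comp, ← Measure.map_apply ((measurable_permSeq _).comp hX) (hB x)]
    exact (congrArg (· (B x)) (hinv _)).trans (Measure.map_apply hX (hB x))
  have hcount : ∀ p, ∑ σ, μ (X ⁻¹' B (σ, p)) = k := fun p => by
    rw [sum_measure_eq_of_card_filter_mem μ (fun σ => hX (hB (σ, p))) (k := k) fun ω => ?_,
      measure_univ, mul_one]
    simpa [B, min_eq_right hk] using card_filter_tbRank_le _ p k
  calc _ = (∑ x : Q × (Q ≃ Fin Q.card),
          μ (X ⁻¹' (permSeq (x.1 : Equiv.Perm (Fin n))⁻¹ ⁻¹' B x))) /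
          Fintype.card (Q × (Q ≃ Fin Q.card)) :=
        measure_mem_of_indepFun_uniform hST hne hUnif hInd fun x => measurable_permSeq _ (hB x)
    _ = (Fintype.card (Q ≃ Fin Q.card) * k) / (Q.card * Fintype.card (Q ≃ Fin Q.card)) := by
        simp_rw [hinvB, Fintype.sum_prod_type_right, hcount, sum_const, card_univ,
          nsmul_eq_mul, Fintype.card_prod, Fintype.card_coe, Nat.cast_mul]
    _ = k / Q.card := by
        rw [mul_comm (Q.card : ℝ≥0∞)]
        exact ENNReal.mul_div_mul_left _ _
          (by simpa using (Fintype.card_pos_iff.2 ⟨Q.equivFin⟩).ne') (by simp)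

theorem worst_likely_assignment_bound_general
    {Ω β : Type*} [MeasurableSpace Ω] [MeasurableSpace β]
    (μ : Measure Ω) [IsProbabilityMeasure μ]
    (t w : ℕ)
    (C : Ω → Fin (t + w) → β × Bool) (hC : Measurable C)
    (hIndepCoord : iIndepFun (fun i ω => C ω i) μ)
    (hIdent : ∀ i j : Fin (t + w), IdentDistrib (fun ω => C ω i) (fun ω => C ω j) μ μ)
    (g : β → Bool)
    (h : (Fin (t + w) → β × Bool) → ℝ) (hh : Measurable h)
    (Q : Finset (Equiv.Perm (Fin (t + w)))) (hQ : Q.Nonempty)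
    (S : Ω → ↥Q) (T : Ω → (↥Q ≃ Fin Q.card))
    (hSTmeas : Measurable (fun ω => (S ω, T ω)))
    (hne : (Finset.univ : Finset (↥Q × (↥Q ≃ Fin Q.card))).Nonempty)
    (hUnif : μ.map (fun ω => (S ω, T ω)) = (PMF.uniformOfFinset Finset.univ hne).toMeasure)
    (hInd : IndepFun C (fun ω => (S ω, T ω)) μ)
    (δ : ℝ) (hδ0 : 0 < δ)
    (L : Ω → Finset (Fin w → Bool))
    (hL : ∀ ω, L ω = Finset.univ.filter (fun a : Fin w → Bool =>
      tbRank
        (fun σ : ↥Q => h (permSeq (σ : Equiv.Perm (Fin (t + w)))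
          (permSeq ((S ω : Equiv.Perm (Fin (t + w))))⁻¹ (assign t w (C ω) a))))
        (T ω) (S ω) ≤ ⌈(1 - δ) * (Q.card : ℝ)⌉₊)) :
    μ {ω | ∃ hLne : (L ω).Nonempty,
        errRate t w g (C ω)
          ≤ (L ω).sup' hLne (fun a => errRate t w g (assign t w (C ω) a))}
      ≥ ENNReal.ofReal (1 - δ) := by
  set k := ⌈(1 - δ) * (Q.card : ℝ)⌉₊
  have hQpos : (0 : ℝ) < Q.card := by exact_mod_cast hQ.card_pos
  have hk : k ≤ Q.card := Nat.ceil_le.2 (by nlinarith)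
  have hbound : ENNReal.ofReal (1 - δ) ≤ k / Q.card := by
    rw [← ENNReal.ofReal_natCast k, ← ENNReal.ofReal_natCast, ← ENNReal.ofReal_div_of_pos hQpos]
    exact ENNReal.ofReal_le_ofReal ((le_div_iff₀ hQpos).2 (Nat.le_ceil _))
  have hexch := map_permSeq_eq_of_iIndepFun_identDistrib hC hIndepCoord hIdent
  have hrank := measure_tbRank_le_eq_div_card hC hexch hh hSTmeas hne hUnif hInd hk
  refine hbound.trans (hrank.symm.le.trans (measure_mono fun ω hω => ?_))
  have htrue : (fun i => (C ω (Fin.natAdd t i)).2) ∈ L ω := by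
    rw [hL ω, mem_filter, assign_labels_self]
    exact ⟨mem_univ _, hω⟩
  refine ⟨⟨_, htrue⟩, ?_⟩
  calc errRate t w g (C ω) = errRate t w g (assign t w (C ω) _) := by rw [assign_labels_self]
    _ ≤ _ := le_sup' (fun a => errRate t w g (assign t w (C ω) a)) htrue

/-- Theorem 2 of the paper (worst likely assignment bound): with probability at least
`1 − δ`, the working-set error `E_C` is bounded by the largest error `E_{C(a)}` over
assignments `a` in the likely set `L`. -/
theorem worst_likely_assignment_bound
    {Ω β : Type*} [MeasurableSpace Ω] [MeasurableSpace β]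
    (μ : Measure Ω) [IsProbabilityMeasure μ]
    (t w : ℕ) (hw : 0 < w)
    (C : Ω → Fin (t + w) → β × Bool) (hC : Measurable C)
    (hIndepCoord : iIndepFun (fun i ω => C ω i) μ)
    (hIdent : ∀ i j : Fin (t + w), IdentDistrib (fun ω => C ω i) (fun ω => C ω j) μ μ)
    (g : β → Bool)
    (h : (Fin (t + w) → β × Bool) → ℝ) (hh : Measurable h)
    (Q : Finset (Equiv.Perm (Fin (t + w)))) (hQ : Q.Nonempty)
    (S : Ω → ↥Q) (T : Ω → (↥Q ≃ Fin Q.card))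
    (hSTmeas : Measurable (fun ω => (S ω, T ω)))
    (hne : (Finset.univ : Finset (↥Q × (↥Q ≃ Fin Q.card))).Nonempty)
    (hUnif : μ.map (fun ω => (S ω, T ω)) = (PMF.uniformOfFinset Finset.univ hne).toMeasure)
    (hInd : IndepFun C (fun ω => (S ω, T ω)) μ)
    (δ : ℝ) (hδ0 : 0 < δ) (hδ1 : δ < 1)
    (L : Ω → Finset (Fin w → Bool))
    (hL : ∀ ω, L ω = Finset.univ.filter (fun a : Fin w → Bool =>
      tbRank
        (fun σ : ↥Q => h (permSeq (σ : Equiv.Perm (Fin (t + w)))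
          (permSeq ((S ω : Equiv.Perm (Fin (t + w))))⁻¹ (assign t w (C ω) a))))
        (T ω) (S ω) ≤ ⌈(1 - δ) * (Q.card : ℝ)⌉₊)) :
    μ {ω | ∃ hLne : (L ω).Nonempty,
        errRate t w g (C ω)
          ≤ (L ω).sup' hLne (fun a => errRate t w g (assign t w (C ω) a))}
      ≥ ENNReal.ofReal (1 - δ) :=
  worst_likely_assignment_bound_general μ t w C hC hIndepCoord hIdent g h hh Q hQ S T hSTmeas hne
    hUnif hInd δ hδ0 L hL
end
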